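/- With x̄(λ) = f_3(λ)(λf_1(λ) − 2f_2(λ))/(λ·f_2(λ)²), there exist constants C > 0 and λ₀ > 0 such that for all λ ≥ λ₀ and all x ≥ 0, F(x,λ) ≤ F(x̄(λ),λ) ≤ C/λ; in particular F(x̄(λ),λ) → 0 as λ → ∞. -/

import Mathlib

/-- `f k x = e^x - ∑_{i=0}^{k-1} x^i / i!`. -/
noncomputable def f (k : ℕ) (x : ℝ) : ℝ :=
  Real.exp x - ∑ i ∈ Finset.range k, x ^ i / (Nat.factorial i : ℝ)

/-- The function `F(x, λ)` from the paper. -/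
noncomputable def F (x lam : ℝ) : ℝ :=
  (x * lam ^ 5 * f 0 lam / (f 2 lam * f 3 lam) + lam ^ 4 * f 0 lam / (f 2 lam) ^ 2) /
    (x * lam * f 2 lam / f 3 lam + lam * f 1 lam / f 2 lam) ^ 2

/-- The maximizer `x̄(λ) = f₃(λ)(λf₁(λ) - 2f₂(λ))/(λ f₂(λ)²)`. -/
noncomputable def xbar (lam : ℝ) : ℝ :=
  f 3 lam * (lam * f 1 lam - 2 * f 2 lam) / (lam * (f 2 lam) ^ 2)

/-- There exist `C > 0` and `λ₀ > 0` so that for `λ ≥ λ₀` and `x ≥ 0`,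
`F(x, λ) ≤ F(x̄(λ), λ) ≤ C/λ`; in particular `F(x̄(λ), λ) → 0` as `λ → ∞`. -/
lemma f_zero (x : ℝ) : f 0 x = Real.exp x := by simp [f]
lemma f_one (x : ℝ) : f 1 x = Real.exp x - 1 := by simp [f]
lemma f_two (x : ℝ) : f 2 x = Real.exp x - 1 - x := by
  simp [f, Finset.sum_range_succ]; ring
lemma f_three (x : ℝ) : f 3 x = Real.exp x - 1 - x - x^2/2 := by
  simp [f, Finset.sum_range_succ, Nat.factorial]; ring

lemma exp_ge6 {x : ℝ} (hx : 0 ≤ x) :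
    1 + x + x^2/2 + x^3/6 + x^4/24 + x^5/120 ≤ Real.exp x := by
  have := Real.sum_le_exp_of_nonneg hx 6
  simp [Finset.sum_range_succ, Nat.factorial] at this
  nlinarith [this]

lemma quad_le (A B C D x : ℝ) (hC : 0 < C) (hD : 0 < D) (hx : 0 ≤ x)
    (hdet : 0 < A*D - B*C) :
    (A*x+B)/(C*x+D)^2 ≤ A^2/(4*(C*(A*D-B*C))) := by
  have hCxD : 0 < C*x+D := by nlinarith
  rw [div_le_div_iff₀ (by positivity) (by positivity)]
  nlinarith [sq_nonneg (A*C*x - (A*D-2*B*C)), mul_pos hC hdet]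

lemma max_eq (A B C D : ℝ) (hA : A ≠ 0) (hC : C ≠ 0) (hd : A*D - B*C ≠ 0) :
    (A * ((A*D-2*B*C)/(A*C)) + B)/(C*((A*D-2*B*C)/(A*C)) + D)^2
      = A^2/(4*(C*(A*D-B*C))) := by
  have h1 : C*((A*D-2*B*C)/(A*C)) + D = 2*(A*D-B*C)/A := by field_simp; ring
  have h2 : A * ((A*D-2*B*C)/(A*C)) + B = (A*D-B*C)/C := by field_simp; ring
  rw [h1, h2]
  field_simp
  ring

set_option maxHeartbeats 1600000 in
lemma main_est : ∀ lam : ℝ, (4:ℝ) ≤ lam → ∀ x : ℝ, 0 ≤ x →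
    F x lam ≤ F (xbar lam) lam ∧ F (xbar lam) lam ≤ 240 / lam := by
  intro lam hlam x hx
  have hl0 : (0:ℝ) < lam := by linarith
  have hE : 0 < Real.exp lam := Real.exp_pos _
  have hE6 := exp_ge6 hl0.le
  have hs1 : 4*lam ≤ lam^2 := by nlinarith
  have hs2 : 4*lam^2 ≤ lam^3 := by nlinarith
  have hs3 : 4*lam^3 ≤ lam^4 := by nlinarith
  have hs4 : 4*lam^4 ≤ lam^5 := by nlinarith
  have hf1 : 0 < f 1 lam := by rw [f_one]; nlinarith
  have hf2 : 0 < f 2 lam := by rw [f_two]; nlinarith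
  have hf3 : 0 < f 3 lam := by rw [f_three]; nlinarith
  have hf2h : Real.exp lam / 2 ≤ f 2 lam := by rw [f_two]; nlinarith
  have hfd : lam / 2 * Real.exp lam ≤ lam * f 1 lam - f 2 lam := by
    rw [f_one, f_two]; nlinarith
  have hfd0 : 0 < lam * f 1 lam - f 2 lam := by nlinarith
  have hE120 : lam^5 ≤ 120 * Real.exp lam := by nlinarith
  obtain ⟨A, hA⟩ : ∃ a : ℝ, a = lam^5 * f 0 lam / (f 2 lam * f 3 lam) := ⟨_, rfl⟩
  obtain ⟨B, hB⟩ : ∃ a : ℝ, a = lam^4 * f 0 lam / (f 2 lam)^2 := ⟨_, rfl⟩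
  obtain ⟨C, hC⟩ : ∃ a : ℝ, a = lam * f 2 lam / f 3 lam := ⟨_, rfl⟩
  obtain ⟨D, hD⟩ : ∃ a : ℝ, a = lam * f 1 lam / f 2 lam := ⟨_, rfl⟩
  have hFrw : ∀ y : ℝ, F y lam = (A*y+B)/(C*y+D)^2 := by
    intro y; rw [F, hA, hB, hC, hD]; ring_nf
  have hCpos : 0 < C := by rw [hC]; exact div_pos (mul_pos hl0 hf2) hf3
  have hDpos : 0 < D := by rw [hD]; exact div_pos (mul_pos hl0 hf1) hf2
  have hApos : 0 < A := by
    rw [hA, f_zero]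
    exact div_pos (mul_pos (pow_pos hl0 5) hE) (mul_pos hf2 hf3)
  have hdet : A*D - B*C
      = lam^5 * Real.exp lam * (lam * f 1 lam - f 2 lam) / ((f 2 lam)^2 * f 3 lam) := by
    rw [hA, hB, hC, hD, f_zero]
    field_simp
  have hdetpos : 0 < A*D - B*C := by
    rw [hdet]
    exact div_pos (mul_pos (mul_pos (pow_pos hl0 5) hE) hfd0)
      (mul_pos (pow_pos hf2 2) hf3)
  have hxb : xbar lam = (A*D-2*B*C)/(A*C) := by
    rw [xbar, hA, hB, hC, hD, f_zero]
    field_simp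
  have hmaxval : A^2/(4*(C*(A*D-B*C)))
      = lam^4 * Real.exp lam / (4 * f 2 lam * (lam * f 1 lam - f 2 lam)) := by
    rw [hdet, hA, hC, f_zero]
    field_simp
  have hFmax : F (xbar lam) lam = A^2/(4*(C*(A*D-B*C))) := by
    rw [hFrw (xbar lam), hxb]
    exact max_eq A B C D hApos.ne' hCpos.ne' hdetpos.ne'
  constructor
  · rw [hFrw x, hFmax]
    exact quad_le A B C D x hCpos hDpos hx hdetpos
  · rw [hFmax, hmaxval, div_le_div_iff₀ (by positivity) hl0]
    have hprod : Real.exp lam / 2 * (lam / 2 * Real.exp lam)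
        ≤ f 2 lam * (lam * f 1 lam - f 2 lam) :=
      mul_le_mul hf2h hfd (by positivity) hf2.le
    have h1 : lam^4 * Real.exp lam * lam ≤ 120 * Real.exp lam ^ 2 := by
      nlinarith [mul_le_mul_of_nonneg_right hE120 hE.le]
    have h2 : 120 * Real.exp lam ^ 2 ≤ 240 * lam * Real.exp lam ^ 2 := by
      nlinarith [sq_nonneg (Real.exp lam)]
    have h3 : 240 * lam * Real.exp lam ^ 2 ≤ 240 * (4 * f 2 lam * (lam * f 1 lam - f 2 lam)) := by
      nlinarith [hprod]
    linarith

lemma F_zero_nonneg (lam : ℝ) (hl : 0 < lam) : 0 ≤ F 0 lam := by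
  rw [F]
  apply div_nonneg _ (sq_nonneg _)
  have h1 : (0:ℝ) * lam^5 * f 0 lam / (f 2 lam * f 3 lam) = 0 := by simp
  rw [h1, zero_add]
  exact div_nonneg (mul_nonneg (by positivity) (by rw [f_zero]; positivity)) (sq_nonneg _)


theorem F_xbar_big_lambda :
    (∃ C : ℝ, 0 < C ∧ ∃ lam₀ : ℝ, 0 < lam₀ ∧
      ∀ lam : ℝ, lam₀ ≤ lam →
        ∀ x : ℝ, 0 ≤ x →
          F x lam ≤ F (xbar lam) lam ∧ F (xbar lam) lam ≤ C / lam) ∧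
      Filter.Tendsto (fun lam : ℝ => F (xbar lam) lam) Filter.atTop (nhds 0) := by
  refine ⟨⟨240, by norm_num, 4, by norm_num, fun lam h x hx => main_est lam h x hx⟩, ?_⟩
  have hev := Filter.eventually_ge_atTop (4:ℝ)
  apply tendsto_of_tendsto_of_tendsto_of_le_of_le'
    (tendsto_const_nhds (x := (0:ℝ)))
    (Filter.Tendsto.div_atTop (tendsto_const_nhds (x := (240:ℝ))) Filter.tendsto_id)
  · filter_upwards [hev] with lam h
    exact le_trans (F_zero_nonneg lam (by linarith)) (main_est lam h 0 le_rfl).1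
  · filter_upwards [hev] with lam h
    exact (main_est lam h 0 le_rfl).2
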